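/- arXiv:1407.4692 — 3 statements merged into one kernel-verified Lean document; each statement's English description precedes it below -/
import Mathlib

section
/- Let R₁, …, R_k be binary relations on a set I, each of height at most ω. Then the converse of the one-step extension relation ≻ on H(R₁ ∪ … ∪ R_k) is well-founded, and the rank of the empty sequence with respect to ≻ (where rank(s) = sup{ rank(s') + 1 : s' ≻ s }) is at most ω^k; i.e. the (R₁ ∪ … ∪ R_k)-homogeneous sequences form a well-founded set of ordinal height at most ω^k. -/
/-- `HSet r` is `H(r)`, the set of `r`-decreasing transitive finite sequences on `I`:
`⟨x₁, …, x_n⟩ ∈ H(r)` iff `i < j` implies `x_j r x_i`. -/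
def HSet {I : Type*} (r : I → I → Prop) : Set (List I) :=
  {l | l.Pairwise fun a b => r b a}

/-- One-step extension on `H(r)`: `s' ≻ s` iff `s' = s ++ [y]` for some `y`. -/
def HExt {I : Type*} (r : I → I → Prop) (s' s : {l : List I // l ∈ HSet r}) : Prop :=
  ∃ y : I, s'.1 = s.1 ++ [y]

/-- The rank of an element under a well-founded relation:
`rank x = sup { rank y + 1 : r y x }`. -/
noncomputable def WFRank {α : Type*} {r : α → α → Prop} (hwf : WellFounded r) (a : α) :
    Ordinal := (hwf.apply a).rank

/-! Send each `x` to its vector of ranks `φ x ∈ ℕ^k`. An `R`-homogeneous sequence becomes a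
sequence of vectors in which every later vector drops strictly below every earlier one in some
coordinate. After a first vector `v`, the rest of such a sequence is an interleaving of its traces
on the fibres `{w | w c = t}` with `t < v c`, and inside a fibre coordinate `c` can no longer drop.
So if the empty sequence on `n` coordinates is given height `ω ^ n`, the natural sum over the
fibres of the heights on one coordinate fewer is a height bound that stays below `ω ^ n` and
strictly decreases whenever the sequence is extended. -/

universe u

open Finsupp Ordinal

noncomputable def cantorEval : ℕ → (ℕ → ℕ) → Ordinal.{u}
  | 0, _ => 0
  | n + 1, x => ω ^ (n : Ordinal) * x n + cantorEval n x

theorem cantorEval_lt_opow (n : ℕ) (x : ℕ → ℕ) : cantorEval.{u} n x < ω ^ (n : Ordinal) := by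
  induction n with
  | zero => simp [cantorEval]
  | succ n ih =>
    rw [Nat.cast_succ]
    exact opow_mul_add_lt_opow (natCast_lt_omega0 _) ih (lt_add_one _)

theorem cantorEval_lt_cantorEval {n j : ℕ} {x y : ℕ → ℕ} (hj : j < n)
    (hxy : ∀ d, j < d → d < n → x d = y d) (hlt : x j < y j) :
    cantorEval.{u} n x < cantorEval n y := by
  induction n with
  | zero => exact absurd hj (Nat.not_lt_zero j)
  | succ n ih =>
    rcases (Nat.lt_succ_iff.1 hj).eq_or_lt with rfl | hjn
    · exact (opow_mul_add_lt_opow_mul (cantorEval_lt_opow j x) (Nat.cast_lt.2 hlt)).trans_le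
        le_self_add
    · change ω ^ (n : Ordinal) * x n + cantorEval n x < ω ^ (n : Ordinal) * y n + cantorEval n y
      rw [hxy n hjn n.lt_succ_self]
      exact add_lt_add_right (ih hjn fun d hjd hdn => hxy d hjd (hdn.trans n.lt_succ_self)) _

theorem cantorEval_eq_zero {n : ℕ} {x : ℕ → ℕ} (hx : ∀ d < n, x d = 0) :
    cantorEval.{u} n x = 0 := by
  induction n with
  | zero => rfl
  | succ n ih =>
    change ω ^ (n : Ordinal) * x n + cantorEval n x = 0
    rw [hx n n.lt_succ_self, ih fun d hd => hx d (hd.trans n.lt_succ_self)]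
    simp

theorem cantorEval_single (n : ℕ) : cantorEval.{u} (n + 1) (single n 1) = ω ^ (n : Ordinal) := by
  change ω ^ (n : Ordinal) * (single n 1 n : ℕ) + cantorEval n (single n 1) = _
  rw [cantorEval_eq_zero (x := ⇑(single n 1)) fun d hd => single_eq_of_ne hd.ne]
  simp

namespace Finsupp.Colex

variable {α : Type*} [LinearOrder α]

theorem lt_single_one_iff {a : α} {x : Colex (α →₀ ℕ)} :
    x < toColex (single a 1) ↔ ∀ d, a ≤ d → ofColex x d = 0 := by
  rw [Colex.lt_iff]
  constructor
  · rintro ⟨i, hagree, hi⟩ d hd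
    obtain rfl : i = a := by
      by_contra hia
      simp [single_eq_of_ne hia] at hi
    rcases hd.eq_or_lt with rfl | hd
    · simpa using hi
    · simpa [single_eq_of_ne hd.ne'] using hagree d hd
  · intro hx
    exact ⟨a, fun d hd => by simp [hx d hd.le, single_eq_of_ne hd.ne'], by simp [hx a le_rfl]⟩

theorem sum_lt_single_one {β : Type*} {s : Finset β} {f : β → Colex (α →₀ ℕ)} {a : α}
    (hf : ∀ b ∈ s, f b < toColex (single a 1)) : ∑ b ∈ s, f b < toColex (single a 1) := by
  refine Finset.sum_induction f (· < toColex (single a 1)) (fun x y hx hy => ?_) ?_ hf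
  · rw [lt_single_one_iff] at hx hy ⊢
    intro d hd
    simp [hx d hd, hy d hd]
  · exact lt_single_one_iff.2 fun _ _ => rfl

end Finsupp.Colex

theorem cantorEval_lt_cantorEval_of_lt {n : ℕ} {x y : Colex (ℕ →₀ ℕ)} (hxy : x < y)
    (hy : y < toColex (single n 1)) :
    cantorEval.{u} n ⇑(ofColex x) < cantorEval n ⇑(ofColex y) := by
  obtain ⟨j, hagree, hj⟩ := Colex.lt_iff.1 hxy
  have hjn : j < n := by
    by_contra! hnj
    rw [Colex.lt_single_one_iff.1 hy j hnj] at hj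
    exact Nat.not_lt_zero _ hj
  exact cantorEval_lt_cantorEval hjn (fun d hjd _ => hagree d hjd) hj

section HeightBound

variable {ι : Type*}

def BadOn (S : Finset ι) (l : List (ι → ℕ)) : Prop :=
  l.Pairwise fun a b => ∃ i ∈ S, b i < a i

def fiber (c : ι) (t : ℕ) (l : List (ι → ℕ)) : List (ι → ℕ) :=
  l.filter fun w => w c = t

theorem fiber_append_singleton (c : ι) (t : ℕ) (l : List (ι → ℕ)) (w : ι → ℕ) :
    fiber c t (l ++ [w]) = if w c = t then fiber c t l ++ [w] else fiber c t l := by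
  split_ifs with h <;> simp [fiber, h]

variable [DecidableEq ι]

theorem BadOn.fiber {S : Finset ι} {l : List (ι → ℕ)} (hl : BadOn S l) (c : ι) (t : ℕ) :
    BadOn (S.erase c) (fiber c t l) := by
  refine (hl.sublist List.filter_sublist).imp_of_mem fun ha hb ⟨i, hiS, hi⟩ => ⟨i, ?_, hi⟩
  have hac : _ = t := of_decide_eq_true (List.mem_filter.1 ha).2
  have hbc : _ = t := of_decide_eq_true (List.mem_filter.1 hb).2
  refine Finset.mem_erase.2 ⟨?_, hiS⟩
  rintro rfl
  exact hi.ne (hbc.trans hac.symm)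

/-- `Colex (ℕ →₀ ℕ)` models the ordinals below `ω ^ ω` by their Cantor normal form coefficients,
`toColex (single n 1)` standing for `ω ^ n`; its addition is the natural (Hessenberg) sum. -/
noncomputable def heightBound : Finset ι → List (ι → ℕ) → Colex (ℕ →₀ ℕ)
  | S, [] => toColex (single S.card 1)
  | S, v :: l => ∑ p ∈ S.sigma fun c => Finset.range (v c),
      heightBound (S.erase p.1) (fiber p.1 p.2 l)
termination_by _ l => l.length
decreasing_by exact Nat.lt_succ_of_le (List.length_filter_le _ _)

theorem heightBound_cons_lt_of_le {S : Finset ι} {v : ι → ℕ} {l : List (ι → ℕ)}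
    (h : ∀ p ∈ S.sigma fun c => Finset.range (v c),
      heightBound (S.erase p.1) (fiber p.1 p.2 l) ≤ toColex (single (S.erase p.1).card 1)) :
    heightBound S (v :: l) < toColex (single S.card 1) := by
  rw [heightBound]
  refine Colex.sum_lt_single_one fun p hp => (h p hp).trans_lt (Colex.single_lt_iff.2 ?_)
  exact Finset.card_erase_lt_of_mem (Finset.mem_sigma.1 hp).1

theorem heightBound_le (S : Finset ι) (l : List (ι → ℕ)) :
    heightBound S l ≤ toColex (single S.card 1) := by
  induction S, l using heightBound.induct with
  | case1 S => rw [heightBound]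
  | case2 S v l ih => exact (heightBound_cons_lt_of_le fun p _ => ih p).le

theorem heightBound_cons_lt (S : Finset ι) (v : ι → ℕ) (l : List (ι → ℕ)) :
    heightBound S (v :: l) < toColex (single S.card 1) :=
  heightBound_cons_lt_of_le fun _ _ => heightBound_le _ _

theorem heightBound_append_lt {S : Finset ι} {l : List (ι → ℕ)} {w : ι → ℕ}
    (hbad : BadOn S (l ++ [w])) : heightBound S (l ++ [w]) < heightBound S l := by
  induction S, l using heightBound.induct with
  | case1 S =>
    rw [heightBound.eq_1]
    exact heightBound_cons_lt S w []
  | case2 S v l ih =>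
    rw [List.cons_append, heightBound, heightBound]
    obtain ⟨c, hcS, hc⟩ := List.rel_of_pairwise_cons hbad (a' := w) (by simp)
    have hbad' : BadOn S (l ++ [w]) := (List.pairwise_cons.1 hbad).2
    have hlt : ∀ p : Σ _ : ι, ℕ, w p.1 = p.2 →
        heightBound (S.erase p.1) (fiber p.1 p.2 (l ++ [w])) <
          heightBound (S.erase p.1) (fiber p.1 p.2 l) := by
      intro p hp
      have hbadp := hbad'.fiber p.1 p.2
      rw [fiber_append_singleton, if_pos hp] at hbadp ⊢
      exact ih p hbadp
    refine Finset.sum_lt_sum (fun p _ => ?_) ⟨⟨c, w c⟩, by simpa using ⟨hcS, hc⟩, hlt _ rfl⟩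
    by_cases hp : w p.1 = p.2
    · exact (hlt p hp).le
    · rw [fiber_append_singleton, if_neg hp]

end HeightBound

theorem WFRank_lt_of_rel {α : Type*} {r : α → α → Prop} (hwf : WellFounded r) {a b : α}
    (h : r a b) : WFRank hwf a < WFRank hwf b :=
  Acc.rank_lt_of_rel (hwf.apply b) h

theorem WFRank_le_of_forall_rel_lt {α : Type u} {r : α → α → Prop} (hwf : WellFounded r)
    (f : α → Ordinal.{u}) (hf : ∀ a b, r a b → f a < f b) (a : α) : WFRank hwf a ≤ f a := by
  induction a using hwf.induction with
  | _ a ih =>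
    rw [WFRank, Acc.rank_eq]
    exact Ordinal.iSup_le fun b => Order.succ_le_of_lt ((ih b b.2).trans_lt (hf b a b.2))

theorem exists_nat_lt_of_WFRank_lt_omega0 {α : Type*} {r : α → α → Prop} (hwf : WellFounded r)
    (h : ∀ x, WFRank hwf x < ω) : ∃ f : α → ℕ, ∀ x y, r x y → f x < f y := by
  choose f hf using fun x => lt_omega0.1 (h x)
  refine ⟨f, fun x y hxy => ?_⟩
  have := WFRank_lt_of_rel hwf hxy
  rwa [hf x, hf y, Nat.cast_lt] at this

theorem exists_WFRank_HExt_nil_le_omega0_opow_card {I : Type u} {ι : Type*} [Fintype ι]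
    [DecidableEq ι] (R : ι → I → I → Prop) (φ : I → ι → ℕ)
    (hφ : ∀ i x y, R i x y → φ x i < φ y i) :
    ∃ hwf : WellFounded (HExt fun x y => ∃ i, R i x y),
      WFRank hwf ⟨[], List.Pairwise.nil⟩ ≤ ω ^ (Fintype.card ι : Ordinal) := by
  set n := Fintype.card ι
  let F : {l : List I // l ∈ HSet fun x y => ∃ i, R i x y} → Ordinal.{u} := fun s =>
    cantorEval (n + 1) ⇑(ofColex (heightBound Finset.univ (s.1.map φ)))
  have hF : ∀ s' s, HExt _ s' s → F s' < F s := by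
    rintro ⟨_, hs'⟩ s ⟨y, rfl⟩
    have hbad : BadOn Finset.univ (s.1.map φ ++ [φ y]) := by
      rw [← List.map_singleton (f := φ), ← List.map_append, BadOn, List.pairwise_map]
      exact hs'.imp fun ⟨i, hi⟩ => ⟨i, Finset.mem_univ i, hφ i _ _ hi⟩
    refine cantorEval_lt_cantorEval_of_lt ?_ ((heightBound_le _ _).trans_lt
      (Colex.single_lt_iff.2 (by simp [n])))
    simpa using heightBound_append_lt hbad
  refine ⟨Subrelation.wf (hF _ _) (InvImage.wf F wellFounded_lt), ?_⟩
  refine (WFRank_le_of_forall_rel_lt _ F hF _).trans_eq ?_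
  simp only [F, List.map_nil, heightBound, Finset.card_univ]
  exact cantorEval_single n

/-- if `R₁, …, R_k` are binary relations on `I`, each of height at most `ω`,
then the converse of the one-step extension relation on `H(R₁ ∪ ⋯ ∪ R_k)` is well-founded
and the rank of the empty sequence is at most `ω^k`. -/
theorem stmt_3 {I : Type u} (k : ℕ) (R : Fin k → I → I → Prop)
    (hht : ∀ i, ∃ hwf : WellFounded (R i), ∀ x : I, WFRank hwf x < Ordinal.omega0.{u}) :
    ∃ hwf : WellFounded (HExt fun x y => ∃ i, R i x y),
      WFRank hwf ⟨[], List.Pairwise.nil⟩ ≤ Ordinal.omega0.{u} ^ (k : Ordinal) := by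
  choose hwf hlt using hht
  choose φ hφ using fun i => exists_nat_lt_of_WFRank_lt_omega0 (hwf i) (hlt i)
  simpa using exists_WFRank_HExt_nil_le_omega0_opow_card R (fun x i => φ i x) hφ
end

section
/- Let R₁, …, R_k be binary relations on a set I and let α₁, …, α_k be ordinals such that each R_i has height at most α_i. Then the converse of the one-step extension relation ≻ on H(R₁ ∪ … ∪ R_k) is well-founded, and the rank of the empty sequence with respect to ≻ (where rank(s) = sup{ rank(s') + 1 : s' ≻ s }) is at most 2^(α₁ ⊕ … ⊕ α_k), where ⊕ denotes the natural (Hessenberg) sum of ordinals and 2^γ is ordinal exponentiation. -/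
universe v

/-! `NatOrdinal` (natural operations on ordinals) was removed from Mathlib; it is restored here
with its old meaning: a copy of `Ordinal` whose addition is the natural (Hessenberg) sum `nadd`. -/

/-- Natural (Hessenberg) sum of ordinals, as in the old `Ordinal.nadd`. -/
noncomputable def Ordinal.nadd (a b : Ordinal.{v}) : Ordinal.{v} :=
  max (⨆ x : Set.Iio a, Order.succ (Ordinal.nadd x.1 b))
    (⨆ x : Set.Iio b, Order.succ (Ordinal.nadd a x.1))
termination_by (a, b)
decreasing_by all_goals cases x; decreasing_tactic

namespace Ordinal

theorem nadd_def' (a b : Ordinal.{v}) : nadd a b = max (⨆ x : Set.Iio a, Order.succ (nadd x.1 b))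
    (⨆ x : Set.Iio b, Order.succ (nadd a x.1)) := by
  rw [nadd]

theorem nadd_lt_nadd_right' {a' a : Ordinal.{v}} (h : a' < a) (b : Ordinal.{v}) : nadd a' b < nadd a b := by
  rw [nadd_def' a b]
  refine lt_of_lt_of_le ?_ (le_max_left _ _)
  rw [Ordinal.lt_iSup_iff]
  exact ⟨⟨a', h⟩, Order.lt_succ _⟩

theorem nadd_lt_nadd_left' {b' b : Ordinal.{v}} (h : b' < b) (a : Ordinal.{v}) : nadd a b' < nadd a b := by
  rw [nadd_def' a b]
  refine lt_of_lt_of_le ?_ (le_max_right _ _)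
  rw [Ordinal.lt_iSup_iff]
  exact ⟨⟨b', h⟩, Order.lt_succ _⟩

theorem nadd_le_nadd_right' {a' a : Ordinal.{v}} (h : a' ≤ a) (b : Ordinal.{v}) : nadd a' b ≤ nadd a b := by
  rcases h.eq_or_lt with rfl | h
  · exact le_rfl
  · exact (nadd_lt_nadd_right' h b).le

theorem nadd_le_nadd_left' {b' b : Ordinal.{v}} (h : b' ≤ b) (a : Ordinal.{v}) : nadd a b' ≤ nadd a b := by
  rcases h.eq_or_lt with rfl | h
  · exact le_rfl
  · exact (nadd_lt_nadd_left' h a).le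

theorem nadd_le_iff' {a b c : Ordinal.{v}} :
    nadd a b ≤ c ↔ (∀ a' < a, nadd a' b < c) ∧ ∀ b' < b, nadd a b' < c := by
  rw [nadd_def' a b, max_le_iff, Ordinal.iSup_le_iff, Ordinal.iSup_le_iff]
  simp only [Subtype.forall, Set.mem_Iio, Order.succ_le_iff]

theorem nadd_lt_iff' {a b c : Ordinal.{v}} :
    c < nadd a b ↔ (∃ a' < a, c ≤ nadd a' b) ∨ ∃ b' < b, c ≤ nadd a b' := by
  rw [← not_le, nadd_le_iff']
  simp only [not_and_or, not_forall, not_lt, exists_prop]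

theorem nadd_comm' (a : Ordinal.{v}) : ∀ b : Ordinal.{v}, nadd a b = nadd b a := by
  refine WellFoundedLT.induction (motive := fun a => ∀ b : Ordinal.{v}, nadd a b = nadd b a) a (fun a iha => ?_)
  intro b
  refine WellFoundedLT.induction (motive := fun b => nadd a b = nadd b a) b (fun b ihb => ?_)
  apply le_antisymm
  · rw [nadd_le_iff']
    refine ⟨fun a' ha => ?_, fun b' hb => ?_⟩
    · rw [iha a' ha b]; exact nadd_lt_nadd_left' ha b
    · rw [ihb b' hb]; exact nadd_lt_nadd_right' hb a
  · rw [nadd_le_iff']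
    refine ⟨fun b' hb => ?_, fun a' ha => ?_⟩
    · rw [← ihb b' hb]; exact nadd_lt_nadd_left' hb a
    · rw [← iha a' ha b]; exact nadd_lt_nadd_right' ha b

theorem nadd_zero' (a : Ordinal.{v}) : nadd a 0 = a := by
  refine WellFoundedLT.induction (motive := fun a => nadd a 0 = a) a (fun a iha => ?_)
  apply le_antisymm
  · rw [nadd_le_iff']
    refine ⟨fun a' ha => ?_, fun b' hb => ?_⟩
    · rw [iha a' ha]; exact ha
    · simp at hb
  · by_contra h
    rw [not_le] at h
    have := nadd_lt_nadd_right' h 0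
    rw [iha _ h] at this
    exact lt_irrefl _ this

theorem nadd_assoc' (a : Ordinal.{v}) : ∀ b c : Ordinal.{v}, nadd (nadd a b) c = nadd a (nadd b c) := by
  refine WellFoundedLT.induction
    (motive := fun a => ∀ b c : Ordinal.{v}, nadd (nadd a b) c = nadd a (nadd b c)) a (fun a iha => ?_)
  intro b
  refine WellFoundedLT.induction
    (motive := fun b => ∀ c : Ordinal.{v}, nadd (nadd a b) c = nadd a (nadd b c)) b (fun b ihb => ?_)
  intro c
  refine WellFoundedLT.induction
    (motive := fun c => nadd (nadd a b) c = nadd a (nadd b c)) c (fun c ihc => ?_)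
  apply le_antisymm
  · rw [nadd_le_iff']
    constructor
    · intro d hd
      rcases nadd_lt_iff'.mp hd with ⟨a', ha, hd⟩ | ⟨b', hb, hd⟩
      · calc nadd d c ≤ nadd (nadd a' b) c := nadd_le_nadd_right' hd c
          _ = nadd a' (nadd b c) := iha a' ha b c
          _ < nadd a (nadd b c) := nadd_lt_nadd_right' ha _
      · calc nadd d c ≤ nadd (nadd a b') c := nadd_le_nadd_right' hd c
          _ = nadd a (nadd b' c) := ihb b' hb c
          _ < nadd a (nadd b c) := nadd_lt_nadd_left' (nadd_lt_nadd_right' hb c) a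
    · intro c' hc
      rw [ihc c' hc]
      exact nadd_lt_nadd_left' (nadd_lt_nadd_left' hc b) a
  · rw [nadd_le_iff']
    constructor
    · intro a' ha
      rw [← iha a' ha b c]
      exact nadd_lt_nadd_right' (nadd_lt_nadd_right' ha b) c
    · intro e he
      rcases nadd_lt_iff'.mp he with ⟨b', hb, he⟩ | ⟨c', hc, he⟩
      · calc nadd a e ≤ nadd a (nadd b' c) := nadd_le_nadd_left' he a
          _ = nadd (nadd a b') c := (ihb b' hb c).symm
          _ < nadd (nadd a b) c := nadd_lt_nadd_right' (nadd_lt_nadd_left' hb a) c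
      · calc nadd a e ≤ nadd a (nadd b c') := nadd_le_nadd_left' he a
          _ = nadd (nadd a b) c' := (ihc c' hc).symm
          _ < nadd (nadd a b) c := nadd_lt_nadd_left' hc _

end Ordinal

/-- A copy of `Ordinal` carrying the natural operations (old Mathlib `NatOrdinal`). -/
def NatOrdinal : Type (v + 1) := Ordinal.{v}

/-- The identity map `Ordinal → NatOrdinal`. -/
def Ordinal.toNatOrdinal (a : Ordinal.{v}) : NatOrdinal.{v} := a

/-- The identity map `NatOrdinal → Ordinal`. -/
def NatOrdinal.toOrdinal (a : NatOrdinal.{v}) : Ordinal.{v} := a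

noncomputable instance : Add NatOrdinal.{v} := ⟨fun a b => Ordinal.nadd a b⟩

instance : Zero NatOrdinal.{v} := ⟨(0 : Ordinal.{v})⟩

noncomputable instance : AddCommMonoid NatOrdinal.{v} where
  add_assoc a b c := Ordinal.nadd_assoc' a b c
  zero_add a := (Ordinal.nadd_comm' 0 a).trans (Ordinal.nadd_zero' a)
  add_zero a := Ordinal.nadd_zero' a
  add_comm a b := Ordinal.nadd_comm' a b
  nsmul := nsmulRec

infixl:65 " ♯ " => Ordinal.nadd

open Order

namespace Ordinal

theorem zero_nadd (a : Ordinal) : 0 ♯ a = a :=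
  (nadd_comm' 0 a).trans (nadd_zero' a)

theorem nadd_right_comm (a b c : Ordinal) : a ♯ b ♯ c = a ♯ c ♯ b := by
  rw [nadd_assoc', nadd_comm' b, ← nadd_assoc']

theorem nadd_left_comm (a b c : Ordinal) : a ♯ (b ♯ c) = b ♯ (a ♯ c) := by
  rw [← nadd_assoc', nadd_comm' a b, nadd_assoc']

theorem nadd_le_nadd {a a' b b' : Ordinal} (ha : a ≤ a') (hb : b ≤ b') :
    a ♯ b ≤ a' ♯ b' :=
  (nadd_le_nadd_right' ha b).trans (nadd_le_nadd_left' hb a')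

theorem sub_add_sub_cancel {a b c : Ordinal} (hab : a ≤ b) (hbc : b ≤ c) :
    (b - a) + (c - b) = c - a := by
  have h : a + ((b - a) + (c - b)) = c := by
    rw [← add_assoc, Ordinal.add_sub_cancel_of_le hab, Ordinal.add_sub_cancel_of_le hbc]
  calc (b - a) + (c - b) = a + ((b - a) + (c - b)) - a := (Ordinal.add_sub_cancel _ _).symm
    _ = c - a := by rw [h]

theorem nadd_le_of_strictMono {g : Ordinal → Ordinal → Ordinal}
    (h₁ : ∀ b, StrictMono (g · b)) (h₂ : ∀ a, StrictMono (g a)) (a b : Ordinal) :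
    a ♯ b ≤ g a b := by
  induction a using WellFoundedLT.induction generalizing b with | _ a iha =>
  induction b using WellFoundedLT.induction with | _ b ihb =>
  exact nadd_le_iff'.2 ⟨fun a' ha => (iha a' ha b).trans_lt (h₁ b ha),
    fun b' hb => (ihb b' hb).trans_lt (h₂ a hb)⟩

theorem add_le_nadd (a b : Ordinal) : a + b ≤ a ♯ b := by
  induction b using WellFoundedLT.induction with | _ b ihb =>
  refine le_of_forall_lt fun c hc => ?_
  rcases lt_or_ge c a with hca | hac
  · exact hca.trans_le (by simpa only [nadd_zero'] using nadd_le_nadd_left' (zero_le (a := b)) a)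
  · have hb : c - a < b := by
      rwa [← Ordinal.add_sub_cancel_of_le hac, add_lt_add_iff_left] at hc
    rw [← Ordinal.add_sub_cancel_of_le hac]
    exact (ihb _ hb).trans_lt (nadd_lt_nadd_left' hb a)

theorem nadd_one (a : Ordinal) : a ♯ 1 = succ a := by
  induction a using WellFoundedLT.induction with | _ a iha =>
  refine le_antisymm (nadd_le_iff'.2 ⟨fun a' ha => ?_, fun b hb => ?_⟩) (succ_le_of_lt ?_)
  · rw [iha a' ha]; exact succ_lt_succ ha
  · rw [lt_one_iff.1 hb, nadd_zero']; exact lt_succ a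
  · simpa only [nadd_zero'] using nadd_lt_nadd_left' zero_lt_one a

theorem nadd_natCast (a : Ordinal) (n : ℕ) : a ♯ n = a + n := by
  induction n with
  | zero => rw [Nat.cast_zero, nadd_zero', add_zero]
  | succ n ih =>
    calc a ♯ (n + 1 : ℕ) = a ♯ (n ♯ 1) := by rw [nadd_one, succ_eq_add_one, Nat.cast_succ]
      _ = a + (n + 1 : ℕ) := by
        rw [← nadd_assoc', nadd_one, ih, succ_eq_add_one, Nat.cast_succ, add_assoc]

theorem nadd_le_mul_div_nadd_add_mod_nadd {P : Ordinal} (hP : IsPrincipal (· ♯ ·) P)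
    (a b : Ordinal) : a ♯ b ≤ P * (a / P ♯ b / P) + (a % P ♯ b % P) := by
  rcases eq_or_ne P 0 with rfl | hP₀
  · simp only [Ordinal.div_zero, Ordinal.mod_zero, zero_mul, zero_add, le_refl]
  have mono : ∀ b, StrictMono fun a => P * (a / P ♯ b / P) + (a % P ♯ b % P) := by
    intro b a' a h
    rcases (div_le_left h.le P).lt_or_eq with hq | hq
    · calc P * (a' / P ♯ b / P) + (a' % P ♯ b % P)
          < P * (a' / P ♯ b / P) + P := add_lt_add_right (hP (mod_lt _ hP₀) (mod_lt _ hP₀)) _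
        _ = P * succ (a' / P ♯ b / P) := (mul_succ _ _).symm
        _ ≤ P * (a / P ♯ b / P) := mul_le_mul_right (succ_le_of_lt (nadd_lt_nadd_right' hq _)) P
        _ ≤ P * (a / P ♯ b / P) + (a % P ♯ b % P) := le_self_add
    · rw [← div_add_mod a' P, ← div_add_mod a P, hq, add_lt_add_iff_left] at h
      dsimp only
      rw [hq]
      exact add_lt_add_right (nadd_lt_nadd_right' h _) _
  refine nadd_le_of_strictMono mono (fun a => ?_) a b
  simpa only [nadd_comm' (a / P), nadd_comm' (a % P)] using mono a

theorem isPrincipal_nadd_mul_omega0 {P : Ordinal} (hP : IsPrincipal (· ♯ ·) P) :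
    IsPrincipal (· ♯ ·) (P * ω) := by
  rcases eq_or_ne P 0 with rfl | hP₀
  · simp [IsPrincipal]
  intro a b ha hb
  obtain ⟨m, hm⟩ := lt_omega0.1 ((lt_mul_iff_div_lt hP₀).1 ha)
  obtain ⟨n, hn⟩ := lt_omega0.1 ((lt_mul_iff_div_lt hP₀).1 hb)
  calc a ♯ b ≤ P * (a / P ♯ b / P) + (a % P ♯ b % P) :=
        nadd_le_mul_div_nadd_add_mod_nadd hP a b
    _ < P * (a / P ♯ b / P) + P := add_lt_add_right (hP (mod_lt _ hP₀) (mod_lt _ hP₀)) _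
    _ = P * ((m + n + 1 : ℕ) : Ordinal) := by
      rw [hm, hn, nadd_natCast, ← mul_succ, succ_eq_add_one]; push_cast; rfl
    _ < P * ω := (mul_lt_mul_iff_of_pos_left (pos_iff_ne_zero.2 hP₀)).2 (natCast_lt_omega0 _)

theorem isPrincipal_nadd_omega0_opow (c : Ordinal) : IsPrincipal (· ♯ ·) (ω ^ c) := by
  induction c using limitRecOn with
  | zero =>
    rw [opow_zero]
    intro a b ha hb
    simpa only [lt_one_iff.1 ha, lt_one_iff.1 hb, nadd_zero'] using zero_lt_one
  | add_one c ih => rw [← succ_eq_add_one, opow_succ]; exact isPrincipal_nadd_mul_omega0 ih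
  | limit c hc ih =>
    intro a b ha hb
    obtain ⟨c₁, hc₁, ha⟩ := (lt_opow_of_isSuccLimit omega0_ne_zero hc).1 ha
    obtain ⟨c₂, hc₂, hb⟩ := (lt_opow_of_isSuccLimit omega0_ne_zero hc).1 hb
    have hmax := max_lt hc₁ hc₂
    refine (ih _ hmax (ha.trans_le ?_) (hb.trans_le ?_)).trans
      ((opow_lt_opow_iff_right one_lt_omega0).2 hmax)
    exacts [opow_le_opow_right omega0_pos (le_max_left _ _),
      opow_le_opow_right omega0_pos (le_max_right _ _)]

theorem two_opow_omega0_mul_add (c : Ordinal) (n : ℕ) :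
    (2 : Ordinal) ^ (ω * c + n) = ω ^ c * (2 ^ n : ℕ) := by
  rw [opow_add, opow_mul, opow_omega0 one_lt_two (natCast_lt_omega0 2), opow_natCast]
  norm_cast

theorem two_opow_nadd_self_le (m : Ordinal) : 2 ^ m ♯ 2 ^ m ≤ 2 ^ succ m := by
  obtain ⟨n, hn⟩ := lt_omega0.1 (mod_lt m omega0_ne_zero)
  have hP₀ : ω ^ (m / ω) ≠ 0 := (opow_pos _ omega0_pos).ne'
  have hm : (2 : Ordinal) ^ m = ω ^ (m / ω) * (2 ^ n : ℕ) := by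
    rw [← two_opow_omega0_mul_add, ← hn, div_add_mod]
  calc 2 ^ m ♯ 2 ^ m ≤ ω ^ (m / ω) * ((2 ^ n : ℕ) ♯ (2 ^ n : ℕ)) + (0 ♯ 0) := by
        simpa only [hm, mul_div_cancel _ hP₀, mul_mod] using
          nadd_le_mul_div_nadd_add_mod_nadd (isPrincipal_nadd_omega0_opow (m / ω)) (2 ^ m) (2 ^ m)
    _ = 2 ^ succ m := by
      rw [nadd_natCast, nadd_zero', add_zero, ← Ordinal.mul_two, ← mul_assoc, ← hm, opow_succ]

theorem two_opow_nadd_two_opow_le {x y T : Ordinal} (hx : x < T) (hy : y < T) :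
    2 ^ x ♯ 2 ^ y ≤ 2 ^ T :=
  calc 2 ^ x ♯ 2 ^ y ≤ 2 ^ max x y ♯ 2 ^ max x y :=
        nadd_le_nadd (opow_le_opow_right two_pos (le_max_left x y))
          (opow_le_opow_right two_pos (le_max_right x y))
    _ ≤ 2 ^ succ (max x y) := two_opow_nadd_self_le _
    _ ≤ 2 ^ T := opow_le_opow_right two_pos (succ_le_of_lt (max_lt hx hy))

theorem two_opow_nadd_lt_of_add_omega0_le {x T S : Ordinal} (h : x + ω ≤ T) (hS : S < 2 ^ T) :
    2 ^ x ♯ S < 2 ^ T := by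
  obtain ⟨n, hn⟩ := lt_omega0.1 (mod_lt T omega0_ne_zero)
  set P := ω ^ (T / ω)
  have hP₀ : P ≠ 0 := (opow_pos _ omega0_pos).ne'
  have hT : (2 : Ordinal) ^ T = P * (2 ^ n : ℕ) := by
    rw [← two_opow_omega0_mul_add, ← hn, div_add_mod]
  have hxT : x < ω * (T / ω) := by
    by_contra! hle
    have : T < x + ω :=
      calc T = ω * (T / ω) + n := by rw [← hn, div_add_mod]
        _ < x + ω := (add_le_add_left hle _).trans_lt (add_lt_add_right (natCast_lt_omega0 n) x)
    exact this.not_ge h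
  have hx : 2 ^ x < P :=
    calc 2 ^ x < 2 ^ (ω * (T / ω)) := (opow_lt_opow_iff_right one_lt_two).2 hxT
      _ = P := by rw [opow_mul, opow_omega0 one_lt_two (natCast_lt_omega0 2)]
  calc 2 ^ x ♯ S ≤ P * (2 ^ x / P ♯ S / P) + (2 ^ x % P ♯ S % P) :=
        nadd_le_mul_div_nadd_add_mod_nadd (isPrincipal_nadd_omega0_opow _) _ _
    _ = P * (S / P) + (2 ^ x ♯ S % P) := by rw [div_eq_zero_of_lt hx, mod_eq_of_lt hx, zero_nadd]
    _ < P * (S / P) + P := add_lt_add_right (isPrincipal_nadd_omega0_opow _ hx (mod_lt _ hP₀)) _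
    _ = P * succ (S / P) := (mul_succ _ _).symm
    _ ≤ 2 ^ T := by
      rw [hT]; exact mul_le_mul_right (succ_le_of_lt ((lt_mul_iff_div_lt hP₀).1 (hT ▸ hS))) P

theorem two_opow_nadd_lt_two_opow_add {d e U S : Ordinal} (hd : 0 < d) (he : 0 < e)
    (hS : S < 2 ^ (e ♯ U)) : 2 ^ (d ♯ U) ♯ S < 2 ^ ((d + e) ♯ U) := by
  rcases (le_add_self : e ≤ d + e).lt_or_eq with hlt | heq
  · calc 2 ^ (d ♯ U) ♯ S < 2 ^ (d ♯ U) ♯ 2 ^ (e ♯ U) := nadd_lt_nadd_left' hS _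
      _ ≤ 2 ^ ((d + e) ♯ U) := two_opow_nadd_two_opow_le
          (nadd_lt_nadd_right' (lt_add_of_pos_right d he) U) (nadd_lt_nadd_right' hlt U)
  · -- `d` is absorbed by `e`, so `e` is infinite and `2 ^ (d ♯ U)` is negligible
    refine two_opow_nadd_lt_of_add_omega0_le ?_ (heq ▸ hS)
    have hωe : ω ≤ e := (le_mul_right ω hd).trans (add_eq_right_iff_mul_omega0_le.1 heq.symm)
    refine (add_le_iff_of_isSuccLimit isSuccLimit_omega0).2 fun n hn => ?_
    obtain ⟨n, rfl⟩ := lt_omega0.1 hn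
    calc d ♯ U + n = (d + n) ♯ U := by rw [← nadd_natCast, ← nadd_natCast, nadd_right_comm]
      _ ≤ (d + e) ♯ U := nadd_le_nadd_right' (add_le_add_right (hn.le.trans hωe) d) U

end Ordinal

universe u

open Ordinal

/-- The box `∏ᵢ [lᵢ, uᵢ)` of ordinal vectors, given by the list of its sides. -/
abbrev OrdinalBox : Type (u + 1) := List (Ordinal.{u} × Ordinal.{u})

namespace OrdinalBox

def Mem (b : OrdinalBox) (w : List Ordinal) : Prop :=
  List.Forall₂ (fun s x => s.1 ≤ x ∧ x < s.2) b w

noncomputable def len : OrdinalBox → Ordinal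
  | [] => 0
  | s :: b => (s.2 - s.1) ♯ len b

/-- The points of `b` that are not coordinatewise `≥ w`, cut into disjoint boxes: the `i`-th
piece holds the points that are `≥ w` in the coordinates before `i` and `< w` in coordinate `i`. -/
noncomputable def split : OrdinalBox → List Ordinal → List OrdinalBox
  | (l, u) :: b, r :: w => (if l < r then [(l, r) :: b] else []) ++ (split b w).map ((r, u) :: ·)
  | _, _ => []

/-- `γ` is added to every exponent: it stands for the sides of an enclosing box, see
`familyMeasure_map_cons`. -/
noncomputable def familyMeasure (γ : Ordinal) : List OrdinalBox → Ordinal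
  | [] => 0
  | b :: L => 2 ^ (γ ♯ b.len) ♯ familyMeasure γ L

def Covers (L : List OrdinalBox) (A : Set (List Ordinal)) : Prop :=
  ∀ w ∈ A, ∃ b ∈ L, b.Mem w

theorem Covers.mono {L : List OrdinalBox} {A B : Set (List Ordinal)} (h : Covers L A)
    (hBA : B ⊆ A) : Covers L B :=
  fun w hw => h w (hBA hw)

theorem familyMeasure_append (γ : Ordinal) (L M : List OrdinalBox) :
    familyMeasure γ (L ++ M) = familyMeasure γ L ♯ familyMeasure γ M := by
  induction L with
  | nil => rw [List.nil_append, familyMeasure, zero_nadd]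
  | cons b L ih => rw [List.cons_append, familyMeasure, familyMeasure, ih, nadd_assoc']

theorem familyMeasure_map_cons (γ l u : Ordinal) (L : List OrdinalBox) :
    familyMeasure γ (L.map ((l, u) :: ·)) = familyMeasure (γ ♯ (u - l)) L := by
  induction L with
  | nil => rfl
  | cons b L ih => rw [List.map_cons, familyMeasure, familyMeasure, ih, len, nadd_assoc']

theorem exists_mem_split_mem : ∀ {b : OrdinalBox} {w w' : List Ordinal}, b.Mem w → b.Mem w' →
    ¬ List.Forall₂ (· ≤ ·) w w' → ∃ p ∈ b.split w, p.Mem w'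
  | _, _, _, .nil, .nil, h => (h .nil).elim
  | (l, u) :: b, r :: w, x :: w', .cons _ hw, .cons ⟨hlx, hxu⟩ hw', h => by
    rcases lt_or_ge x r with hxr | hrx
    · exact ⟨(l, r) :: b, by simp [split, hlx.trans_lt hxr], .cons ⟨hlx, hxr⟩ hw'⟩
    · obtain ⟨p, hp, hpw'⟩ := exists_mem_split_mem hw hw' fun h' => h (.cons hrx h')
      exact ⟨(r, u) :: p, by simp [split, hp], .cons ⟨hrx, hxu⟩ hpw'⟩

theorem familyMeasure_split_lt : ∀ {b : OrdinalBox} {w : List Ordinal}, b.Mem w →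
    ∀ γ, familyMeasure γ (b.split w) < 2 ^ (γ ♯ b.len)
  | _, _, .nil, γ => opow_pos _ two_pos
  | (l, u) :: b, r :: w, .cons ⟨hlr, hru⟩ hw, γ => by
    have ih := familyMeasure_split_lt hw (γ ♯ (u - r))
    rw [split, familyMeasure_append, familyMeasure_map_cons]
    split_ifs with hl
    · have key := two_opow_nadd_lt_two_opow_add (U := γ ♯ len b)
        (lt_sub.2 (by rwa [add_zero] : l + 0 < r)) (lt_sub.2 (by rwa [add_zero] : r + 0 < u))
        (ih.trans_eq (by rw [nadd_assoc', nadd_left_comm]))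
      rw [sub_add_sub_cancel hlr hru.le] at key
      simpa only [familyMeasure, len, nadd_zero', nadd_left_comm γ] using key
    · obtain rfl : l = r := le_antisymm hlr (not_lt.1 hl)
      simpa only [familyMeasure, len, zero_nadd, nadd_assoc'] using ih

theorem exists_covers_lt {L : List OrdinalBox} {A : Set (List Ordinal)} {w : List Ordinal}
    (hL : Covers L A) (hw : w ∈ A) :
    ∃ L', Covers L' {w' ∈ A | ¬ List.Forall₂ (· ≤ ·) w w'} ∧
      familyMeasure 0 L' < familyMeasure 0 L := by
  obtain ⟨b, hb, hwb⟩ := hL w hw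
  obtain ⟨L₁, L₂, rfl⟩ := List.append_of_mem hb
  refine ⟨L₁ ++ b.split w ++ L₂, fun w' ⟨hw'A, hw'⟩ => ?_, ?_⟩
  · obtain ⟨b', hb', hw'b'⟩ := hL w' hw'A
    simp only [List.mem_append, List.mem_cons] at hb' ⊢
    rcases hb' with hb' | rfl | hb'
    · exact ⟨b', .inl (.inl hb'), hw'b'⟩
    · obtain ⟨p, hp, hw'p⟩ := exists_mem_split_mem hwb hw'b' hw'
      exact ⟨p, .inl (.inr hp), hw'p⟩
    · exact ⟨b', .inr hb', hw'b'⟩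
  · simp only [familyMeasure_append, familyMeasure, nadd_assoc']
    exact nadd_lt_nadd_left' (nadd_lt_nadd_right' (familyMeasure_split_lt hwb 0) _) _

noncomputable def coverMeasure (A : Set (List Ordinal)) : Ordinal :=
  sInf (familyMeasure 0 '' {L | Covers L A})

theorem coverMeasure_le {L : List OrdinalBox} {A : Set (List Ordinal)} (h : Covers L A) :
    coverMeasure A ≤ familyMeasure 0 L :=
  csInf_le' ⟨L, h, rfl⟩

theorem coverMeasure_lt {L : List OrdinalBox} {A B : Set (List Ordinal)} {w : List Ordinal}
    (hL : Covers L A) (hw : w ∈ A) (hB : B ⊆ {w' ∈ A | ¬ List.Forall₂ (· ≤ ·) w w'}) :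
    coverMeasure B < coverMeasure A := by
  have hne : {L | Covers L A}.Nonempty := ⟨L, hL⟩
  obtain ⟨L₀, hL₀, h₀⟩ := csInf_mem (hne.image (familyMeasure 0))
  obtain ⟨L', hL', hlt⟩ := exists_covers_lt hL₀ hw
  exact (coverMeasure_le (hL'.mono hB)).trans_lt (hlt.trans_eq h₀)

theorem len_map_zero {ι : Type*} (a : ι → Ordinal.{u}) (l : List ι) :
    len (l.map fun i => (0, a i)) =
      NatOrdinal.toOrdinal (l.map fun i => Ordinal.toNatOrdinal (a i)).sum := by
  induction l with
  | nil => rfl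
  | cons i l ih => rw [List.map_cons, len, ih, Ordinal.sub_zero]; rfl

end OrdinalBox

theorem exists_wellFounded_wfRank_le {α : Type u} {r : α → α → Prop} (f : α → Ordinal.{u})
    (hf : ∀ a b, r a b → f a < f b) : ∃ hwf : WellFounded r, ∀ a, WFRank hwf a ≤ f a := by
  have hwf : WellFounded r := Subrelation.wf (hf _ _ ·) (InvImage.wf f wellFounded_lt)
  refine ⟨hwf, fun a => ?_⟩
  induction a using hwf.induction with | _ a ih =>
  rw [WFRank, Acc.rank_eq]
  exact Ordinal.iSup_le fun b => succ_le_of_lt ((ih b b.2).trans_lt (hf _ _ b.2))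

open OrdinalBox in
theorem exists_wellFounded_hExt_wfRank_nil_le {I : Type u} (r : I → I → Prop)
    (v : I → List Ordinal.{u}) (b₀ : OrdinalBox.{u}) (hv : ∀ y, b₀.Mem (v y))
    (hr : ∀ x y, r x y → ¬ List.Forall₂ (· ≤ ·) (v y) (v x)) :
    ∃ hwf : WellFounded (HExt r), WFRank hwf ⟨[], List.Pairwise.nil⟩ ≤ 2 ^ len b₀ := by
  let μ : {s // s ∈ HSet r} → Ordinal := fun s =>
    coverMeasure (v '' {y | ∀ x ∈ s.1, r y x})
  have hcov : ∀ s : List I, Covers [b₀] (v '' {y | ∀ x ∈ s, r y x}) := by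
    rintro s _ ⟨y, -, rfl⟩
    exact ⟨b₀, List.mem_singleton_self _, hv y⟩
  have hμ : ∀ t s, HExt r t s → μ t < μ s := by
    rintro ⟨_, ht⟩ ⟨s, -⟩ ⟨y, rfl⟩
    refine coverMeasure_lt (hcov s) ⟨y, fun x hx => ?_, rfl⟩ ?_
    · exact (List.pairwise_append.1 ht).2.2 x hx y (List.mem_singleton_self y)
    · rintro _ ⟨z, hz, rfl⟩
      exact ⟨⟨z, fun x hx => hz x (List.mem_append_left _ hx), rfl⟩,
        hr z y (hz y (List.mem_append_right _ (List.mem_singleton_self y)))⟩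
  obtain ⟨hwf, hrank⟩ := exists_wellFounded_wfRank_le μ hμ
  refine ⟨hwf, (hrank _).trans ((coverMeasure_le (hcov [])).trans_eq ?_)⟩
  rw [familyMeasure, familyMeasure, zero_nadd, nadd_zero']

/-- if each `R i` has height at most `α i`, then the converse of the one-step
extension relation on `H(R₁ ∪ ⋯ ∪ R_k)` is well-founded and the rank of the empty sequence
is at most `2 ^ (α₁ ⊕ ⋯ ⊕ α_k)`, where `⊕` is the natural (Hessenberg) sum. -/
theorem stmt_4 {I : Type u} (k : ℕ) (R : Fin k → I → I → Prop) (a : Fin k → Ordinal.{u})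
    (hht : ∀ i, ∃ hwf : WellFounded (R i), ∀ x : I, WFRank hwf x < a i) :
    ∃ hwf : WellFounded (HExt fun x y => ∃ i, R i x y),
      WFRank hwf ⟨[], List.Pairwise.nil⟩ ≤
        (2 : Ordinal) ^ NatOrdinal.toOrdinal (∑ i, Ordinal.toNatOrdinal (a i)) := by
  choose hwf hlt using hht
  let v : I → List Ordinal := fun y => (List.finRange k).map fun i => WFRank (hwf i) y
  have hv : ∀ y, OrdinalBox.Mem ((List.finRange k).map fun i => (0, a i)) (v y) := by
    intro y
    simp only [v, OrdinalBox.Mem, List.forall₂_map_left_iff, List.forall₂_map_right_iff,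
      List.forall₂_same]
    exact fun i _ => ⟨zero_le, hlt i y⟩
  have hr : ∀ x y, (∃ i, R i x y) → ¬ List.Forall₂ (· ≤ ·) (v y) (v x) := by
    rintro x y ⟨i, hi⟩ h
    simp only [v, List.forall₂_map_left_iff, List.forall₂_map_right_iff,
      List.forall₂_same] at h
    exact (h i (List.mem_finRange i)).not_gt (Acc.rank_lt_of_rel ((hwf i).apply y) hi)
  obtain ⟨hwfH, hrank⟩ := exists_wellFounded_hExt_wfRank_nil_le _ v _ hv hr
  exact ⟨hwfH, hrank.trans_eq (by rw [OrdinalBox.len_map_zero, Fin.sum_univ_def])⟩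
end

section
/- For every k ≥ 1 and every primitive recursive function σ : ℕ → ℕ^k (i.e. all k component functions are primitive recursive), there exists a primitive recursive function g : ℕ → ℕ such that for all n ∈ ℕ there exists m with n ≤ m ≤ g(n) and σ(m) ≼_k σ(m+1), where ≼_k denotes the lexicographic order on ℕ^k. -/
/-- The lexicographic order `≼_k` on `ℕ^k = Fin k → ℕ` (components ordered by significance,
position `0` most significant). -/
def lexLe {k : ℕ} (x y : Fin k → ℕ) : Prop :=
  x = y ∨ ∃ i : Fin k, x i < y i ∧ ∀ j : Fin k, j < i → x j = y j

/-- Totality of the lex order. -/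
lemma lexLe_total {k : ℕ} (x y : Fin k → ℕ) :
    lexLe x y ∨ ∃ i : Fin k, y i < x i ∧ ∀ j : Fin k, j < i → x j = y j := by
  by_cases h : x = y
  · exact Or.inl (Or.inl h)
  · have hne : (Finset.univ.filter fun i => x i ≠ y i).Nonempty := by
      rw [Finset.filter_nonempty_iff]
      by_contra hc
      push_neg at hc
      exact h (funext fun i => hc i (Finset.mem_univ i))
    set i₀ := Finset.min' _ hne with hi0
    have hmem := Finset.min'_mem _ hne
    rw [Finset.mem_filter] at hmem
    have hlt : ∀ j : Fin k, j < i₀ → x j = y j := by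
      intro j hj
      by_contra hc
      have := Finset.min'_le (Finset.univ.filter fun i => x i ≠ y i) j (Finset.mem_filter.2 ⟨Finset.mem_univ j, hc⟩)
      exact absurd hj (not_lt.2 this)
    rcases lt_or_gt_of_ne hmem.2 with h1 | h1
    · exact Or.inl (Or.inr ⟨i₀, h1, hlt⟩)
    · exact Or.inr ⟨i₀, h1, hlt⟩

/-- for every `k ≥ 1` and every primitive recursive `σ : ℕ → ℕ^k`
(i.e. all components are primitive recursive), there is a primitive recursive `g : ℕ → ℕ`
such that for all `n` there is `m` with `n ≤ m ≤ g n` and `σ m ≼_k σ (m+1)`. -/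
theorem stmt_16 (k : ℕ) (hk : 1 ≤ k) (σ : ℕ → Fin k → ℕ)
    (hσ : ∀ i : Fin k, Primrec fun n => σ n i) :
    ∃ g : ℕ → ℕ, Primrec g ∧ ∀ n : ℕ, ∃ m : ℕ, n ≤ m ∧ m ≤ g n ∧ lexLe (σ m) (σ (m + 1)) := by
  clear hk
  induction k with
  | zero =>
      exact ⟨id, Primrec.id, fun n => ⟨n, le_refl n, le_refl n,
        Or.inl (funext fun i => i.elim0)⟩⟩
  | succ k ih =>
      set f : ℕ → ℕ := fun n => σ n 0 with hf
      set τ : ℕ → Fin k → ℕ := fun n i => σ n i.succ with hτ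
      obtain ⟨g', hg', hspec⟩ := ih τ (fun i => hσ i.succ)
      set G : ℕ → ℕ := fun a => max a (g' a) + 1 with hG
      have hGpr : Primrec G :=
        Primrec.succ.comp ((Primrec.nat_max).comp Primrec.id hg')
      have hGgt : ∀ a, a < G a := fun a => Nat.lt_succ_of_le (le_max_left _ _)
      -- Lemma A: strict lex decrease implies f non-increasing
      have lemA : ∀ m, ¬ lexLe (σ m) (σ (m+1)) → f (m+1) ≤ f m := by
        intro m hm
        rcases lexLe_total (σ m) (σ (m+1)) with h | ⟨i, hi, hj⟩
        · exact absurd h hm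
        · rcases eq_or_ne i 0 with rfl | hi0
          · exact le_of_lt hi
          · exact le_of_eq (hj 0 (by
              rcases Fin.eq_succ_of_ne_zero hi0 with ⟨j, rfl⟩
              exact j.succ_pos)).symm
      -- Lemma B: strict lex decrease + τ non-decrease implies f strict decrease
      have lemB : ∀ m, ¬ lexLe (σ m) (σ (m+1)) → lexLe (τ m) (τ (m+1)) → f (m+1) < f m := by
        intro m hm hτm
        rcases lexLe_total (σ m) (σ (m+1)) with h | ⟨i, hi, hj⟩
        · exact absurd h hm
        rcases eq_or_ne i 0 with rfl | hi0
        · exact hi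
        rcases Fin.eq_succ_of_ne_zero hi0 with ⟨j, rfl⟩
        exfalso
        rcases hτm with h | ⟨j', hj', hj''⟩
        · have : τ (m+1) j = τ m j := by rw [h]
          simp only [hτ] at this
          omega
        rcases lt_trichotomy j' j with h1 | rfl | h1
        · have := hj j'.succ (Fin.succ_lt_succ_iff.2 h1)
          simp only [hτ] at hj'
          omega
        · simp only [hτ] at hj'; omega
        · have := hj'' j h1
          simp only [hτ] at this; omega
      -- f non-increasing along a descent interval
      have chain : ∀ a b, a ≤ b → (∀ m, a ≤ m → m < b → ¬ lexLe (σ m) (σ (m+1))) →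
          f b ≤ f a := by
        intro a b hab hdesc
        induction b with
        | zero =>
            obtain rfl : a = 0 := Nat.le_zero.1 hab
            exact le_refl _
        | succ b ihb =>
            rcases Nat.eq_or_lt_of_le hab with rfl | hab'
            · exact le_refl _
            · have hab'' : a ≤ b := Nat.lt_succ_iff.1 hab'
              exact le_trans (lemA b (hdesc b hab'' (Nat.lt_succ_self b)))
                (ihb hab'' fun m hm hm' => hdesc m hm (Nat.lt_succ_of_lt hm'))
      -- strict drop over [a, G a]
      have drop : ∀ a, (∀ m, a ≤ m → m < G a → ¬ lexLe (σ m) (σ (m+1))) →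
          f (G a) < f a := by
        intro a hdesc
        obtain ⟨m, hm1, hm2, hm3⟩ := hspec a
        have hmGa : m < G a := Nat.lt_succ_of_le (le_trans hm2 (le_max_right _ _))
        have hstrict : f (m+1) < f m := lemB m (hdesc m hm1 hmGa) hm3
        calc f (G a) ≤ f (m+1) := chain (m+1) (G a) hmGa
              (fun l hl hl' => hdesc l (le_trans (le_trans hm1 (Nat.le_succ m)) hl) hl')
          _ < f m := hstrict
          _ ≤ f a := chain a m hm1 (fun l hl hl' => hdesc l hl (lt_trans hl' hmGa))
      refine ⟨fun n => G^[f n + 1] n, ?_, ?_⟩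
      · have := Primrec.nat_iterate (f := fun n => f n + 1) (g := fun n : ℕ => n)
          (h := fun _ a => G a) (Primrec.succ.comp (hσ 0)) Primrec.id
          (hGpr.comp Primrec.snd)
        exact this
      · intro n
        by_contra hc
        push_neg at hc
        -- hc : ∀ m, n ≤ m → m ≤ G^[f n + 1] n → ¬ lexLe (σ m) (σ (m+1))
        have hiter_ge : ∀ t, n ≤ G^[t] n := by
          intro t
          induction t with
          | zero => simp
          | succ t iht =>
              rw [Function.iterate_succ_apply']
              exact le_trans iht (le_of_lt (hGgt _))
        have hiter_mono : ∀ s t, s ≤ t → G^[s] n ≤ G^[t] n := by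
          intro s t hst
          induction t with
          | zero => simp_all
          | succ t iht =>
              rcases Nat.eq_or_lt_of_le hst with rfl | h
              · exact le_refl _
              · rw [Function.iterate_succ_apply']
                exact le_trans (iht (Nat.lt_succ_iff.1 h)) (le_of_lt (hGgt _))
        have key : ∀ t, t ≤ f n + 1 → f (G^[t] n) + t ≤ f n := by
          intro t ht
          induction t with
          | zero => simp
          | succ t iht =>
              have h1 : f (G^[t] n) + t ≤ f n := iht (le_of_lt ht)
              rw [Function.iterate_succ_apply']
              have h2 : f (G (G^[t] n)) < f (G^[t] n) := by
                apply drop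
                intro m hm hm'
                apply hc m (le_trans (hiter_ge t) hm)
                calc m ≤ G^[t+1] n := by
                        rw [Function.iterate_succ_apply']; omega
                  _ ≤ G^[f n + 1] n := hiter_mono _ _ ht
              omega
        have := key (f n + 1) (le_refl _)
        omega
end
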